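/- In any associative unital ℂ-algebra A whose elements b⁺, b⁻, f⁺, f⁻ satisfy the defining relations of P_BF^{(1,1)}, the even bilinears act on the odd elements Q^±, R^± by: [{b⁺, b⁻}, Q^±] = ∓2Q^±; [[f⁺, f⁻], Q^±] = ±2Q^±; [{b⁺, b⁻}, R^±] = ±2R^±; [[f⁺, f⁻], R^±] = ±2R^±; [{b⁺, b⁻}, [f⁺, f⁻]] = 0; [(b⁺)², Q⁺] = −2R⁺; [(b⁺)², Q⁻] = 0; [(b⁺)², R⁺] = 0; [(b⁺)², R⁻] = −2Q⁻; [(b⁻)², Q⁺] = 0; [(b⁻)², Q⁻] = 2R⁻; [(b⁻)², R⁺] = 2Q⁺; [(b⁻)², R⁻] = 0. -/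

import Mathlib

/-- The commutator `[x, y] = x*y - y*x`. -/
def pbComm {A : Type*} [Ring A] (x y : A) : A := x * y - y * x

/-- The anticommutator `{x, y} = x*y + y*x`. -/
def pbAComm {A : Type*} [Ring A] (x y : A) : A := x * y + y * x

/-- A sign, i.e. `+1` or `-1`, regarded as an integer. -/
def IsSign (x : ℤ) : Prop := x = 1 ∨ x = -1

/-- The defining relations of the relative parabose set `P_BF^{(1,1)}` in a single
parabosonic and a single parafermionic degree of freedom: `b 1 = b⁺`, `b (-1) = b⁻`,
`f 1 = f⁺`, `f (-1) = f⁻`. -/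
structure PBF11Relations {A : Type*} [Ring A] [Algebra ℂ A] (b f : ℤ → A) : Prop where
  rel_bbb : ∀ (ξ η ε : ℤ), IsSign ξ → IsSign η → IsSign ε →
    pbComm (pbAComm (b ξ) (b η)) (b ε)
      = ((ε - η : ℤ) : ℂ) • b ξ + ((ε - ξ : ℤ) : ℂ) • b η
  rel_fff : ∀ (ξ η ε : ℤ), IsSign ξ → IsSign η → IsSign ε →
    pbComm (pbComm (f ξ) (f η)) (f ε)
      = ((((ε - η) ^ 2 : ℤ) : ℂ) / 2) • f ξ - ((((ε - ξ) ^ 2 : ℤ) : ℂ) / 2) • f η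
  rel_bbf : ∀ (ξ η ε : ℤ), IsSign ξ → IsSign η → IsSign ε →
    pbComm (pbAComm (b ξ) (b η)) (f ε) = 0
  rel_ffb : ∀ (ξ η ε : ℤ), IsSign ξ → IsSign η → IsSign ε →
    pbComm (pbComm (f ξ) (f η)) (b ε) = 0
  rel_fbb : ∀ (ξ η ε : ℤ), IsSign ξ → IsSign η → IsSign ε →
    pbComm (pbAComm (f ξ) (b η)) (b ε) = ((ε - η : ℤ) : ℂ) • f ξ
  rel_bff : ∀ (ξ η ε : ℤ), IsSign ξ → IsSign η → IsSign ε →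
    pbAComm (pbAComm (b ξ) (f η)) (f ε) = ((((ε - η) ^ 2 : ℤ) : ℂ) / 2) • b ξ

/-- `Q⁺ := ½{b⁻, f⁺}`. -/
noncomputable def Qp {A : Type*} [Ring A] [Algebra ℂ A] (b f : ℤ → A) : A :=
  (1 / 2 : ℂ) • pbAComm (b (-1)) (f 1)

/-- `Q⁻ := ½{b⁺, f⁻}`. -/
noncomputable def Qm {A : Type*} [Ring A] [Algebra ℂ A] (b f : ℤ → A) : A :=
  (1 / 2 : ℂ) • pbAComm (b 1) (f (-1))

/-- `R⁺ := ½{b⁺, f⁺}`. -/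
noncomputable def Rp {A : Type*} [Ring A] [Algebra ℂ A] (b f : ℤ → A) : A :=
  (1 / 2 : ℂ) • pbAComm (b 1) (f 1)

/-- `R⁻ := ½{b⁻, f⁻}`. -/
noncomputable def Rm {A : Type*} [Ring A] [Algebra ℂ A] (b f : ℤ → A) : A :=
  (1 / 2 : ℂ) • pbAComm (b (-1)) (f (-1))

/-! For an even element `e`, the map `x ↦ [e, x]` is a derivation of both `{·, ·}` and `[·, ·]`.
The relations determine it on the generators for `e = {b⁺, b⁻}`, `[f⁺, f⁻]` and
`(b^ξ)² = ½{b^ξ, b^ξ}`: the first scales `b^ε` by `2ε` and kills `f`, the second scales `f^ε`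
by `2ε` and kills `b`, and the third sends `b^ε` to `(ε - ξ) b^ξ` and kills `f`.
The Leibniz rule then gives the action on every bilinear `{b^ξ, f^η}`. -/

section Brackets

variable {R A : Type*} [CommSemiring R] [Ring A] [Algebra R A]

theorem pbComm_pbAComm (e x y : A) :
    pbComm e (pbAComm x y) = pbAComm (pbComm e x) y + pbAComm x (pbComm e y) := by
  simp only [pbComm, pbAComm]; noncomm_ring

theorem pbComm_pbComm (e x y : A) :
    pbComm e (pbComm x y) = pbComm (pbComm e x) y + pbComm x (pbComm e y) := by
  simp only [pbComm]; noncomm_ring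

theorem pbComm_zero_left (x : A) : pbComm 0 x = 0 := by simp [pbComm]

theorem pbComm_zero_right (x : A) : pbComm x 0 = 0 := by simp [pbComm]

theorem pbAComm_zero_left (x : A) : pbAComm 0 x = 0 := by simp [pbAComm]

theorem pbAComm_zero_right (x : A) : pbAComm x 0 = 0 := by simp [pbAComm]

theorem pbComm_smul_left (c : R) (x y : A) : pbComm (c • x) y = c • pbComm x y := by
  simp only [pbComm, smul_mul_assoc, mul_smul_comm, smul_sub]

theorem pbComm_smul_right (c : R) (x y : A) : pbComm x (c • y) = c • pbComm x y := by
  simp only [pbComm, smul_mul_assoc, mul_smul_comm, smul_sub]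

theorem pbAComm_smul_left (c : R) (x y : A) : pbAComm (c • x) y = c • pbAComm x y := by
  simp only [pbAComm, smul_mul_assoc, mul_smul_comm, smul_add]

theorem pbAComm_smul_right (c : R) (x y : A) : pbAComm x (c • y) = c • pbAComm x y := by
  simp only [pbAComm, smul_mul_assoc, mul_smul_comm, smul_add]

theorem pbComm_mul_self {K : Type*} [Field K] [CharZero K] [Algebra K A] (x y : A) :
    pbComm (x * x) y = (1 / 2 : K) • pbComm (pbAComm x x) y := by
  rw [pbAComm, ← two_smul K, pbComm_smul_left, smul_smul]
  norm_num

end Brackets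

theorem isSign_one : IsSign 1 := Or.inl rfl

theorem isSign_neg_one : IsSign (-1) := Or.inr rfl

namespace PBF11Relations

variable {A : Type*} [Ring A] [Algebra ℂ A] {b f : ℤ → A} (h : PBF11Relations b f)
include h

theorem comm_bb_b {ε : ℤ} (hε : IsSign ε) :
    pbComm (pbAComm (b 1) (b (-1))) (b ε) = ((2 * ε : ℤ) : ℂ) • b ε := by
  rcases hε with rfl | rfl <;>
    norm_num [h.rel_bbb _ _ _ isSign_one isSign_neg_one isSign_one,
      h.rel_bbb _ _ _ isSign_one isSign_neg_one isSign_neg_one]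

theorem comm_ff_f {ε : ℤ} (hε : IsSign ε) :
    pbComm (pbComm (f 1) (f (-1))) (f ε) = ((2 * ε : ℤ) : ℂ) • f ε := by
  rcases hε with rfl | rfl <;>
    norm_num [h.rel_fff _ _ _ isSign_one isSign_neg_one isSign_one,
      h.rel_fff _ _ _ isSign_one isSign_neg_one isSign_neg_one]

theorem comm_bSq_b {ξ ε : ℤ} (hξ : IsSign ξ) (hε : IsSign ε) :
    pbComm (b ξ * b ξ) (b ε) = ((ε - ξ : ℤ) : ℂ) • b ξ := by
  rw [pbComm_mul_self (K := ℂ), h.rel_bbb _ _ _ hξ hξ hε, ← two_smul ℂ, smul_smul, smul_smul]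
  norm_num

theorem comm_bSq_f {ξ ε : ℤ} (hξ : IsSign ξ) (hε : IsSign ε) :
    pbComm (b ξ * b ξ) (f ε) = 0 := by
  rw [pbComm_mul_self (K := ℂ), h.rel_bbf _ _ _ hξ hξ hε, smul_zero]

theorem comm_bb_bf {ξ η : ℤ} (hξ : IsSign ξ) (hη : IsSign η) :
    pbComm (pbAComm (b 1) (b (-1))) (pbAComm (b ξ) (f η))
      = ((2 * ξ : ℤ) : ℂ) • pbAComm (b ξ) (f η) := by
  rw [pbComm_pbAComm, h.comm_bb_b hξ, h.rel_bbf _ _ _ isSign_one isSign_neg_one hη,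
    pbAComm_zero_right, add_zero, pbAComm_smul_left]

theorem comm_ff_bf {ξ η : ℤ} (hξ : IsSign ξ) (hη : IsSign η) :
    pbComm (pbComm (f 1) (f (-1))) (pbAComm (b ξ) (f η))
      = ((2 * η : ℤ) : ℂ) • pbAComm (b ξ) (f η) := by
  rw [pbComm_pbAComm, h.comm_ff_f hη, h.rel_ffb _ _ _ isSign_one isSign_neg_one hξ,
    pbAComm_zero_left, zero_add, pbAComm_smul_right]

theorem comm_bSq_bf {ξ ζ η : ℤ} (hξ : IsSign ξ) (hζ : IsSign ζ) (hη : IsSign η) :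
    pbComm (b ξ * b ξ) (pbAComm (b ζ) (f η)) = ((ζ - ξ : ℤ) : ℂ) • pbAComm (b ξ) (f η) := by
  rw [pbComm_pbAComm, h.comm_bSq_b hξ hζ, h.comm_bSq_f hξ hη, pbAComm_zero_right, add_zero,
    pbAComm_smul_left]

theorem comm_bb_ff : pbComm (pbAComm (b 1) (b (-1))) (pbComm (f 1) (f (-1))) = 0 := by
  rw [pbComm_pbComm, h.rel_bbf _ _ _ isSign_one isSign_neg_one isSign_one,
    h.rel_bbf _ _ _ isSign_one isSign_neg_one isSign_neg_one, pbComm_zero_left,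
    pbComm_zero_right, add_zero]

theorem comm_bb_QR :
    pbComm (pbAComm (b 1) (b (-1))) (Qp b f) = (-2 : ℂ) • Qp b f ∧
    pbComm (pbAComm (b 1) (b (-1))) (Qm b f) = (2 : ℂ) • Qm b f ∧
    pbComm (pbAComm (b 1) (b (-1))) (Rp b f) = (2 : ℂ) • Rp b f ∧
    pbComm (pbAComm (b 1) (b (-1))) (Rm b f) = (-2 : ℂ) • Rm b f := by
  refine ⟨?_, ?_, ?_, ?_⟩ <;>
    simp only [Qp, Qm, Rp, Rm, pbComm_smul_right, h.comm_bb_bf, isSign_one, isSign_neg_one] <;>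
    norm_num [smul_smul]

theorem comm_ff_QR :
    pbComm (pbComm (f 1) (f (-1))) (Qp b f) = (2 : ℂ) • Qp b f ∧
    pbComm (pbComm (f 1) (f (-1))) (Qm b f) = (-2 : ℂ) • Qm b f ∧
    pbComm (pbComm (f 1) (f (-1))) (Rp b f) = (2 : ℂ) • Rp b f ∧
    pbComm (pbComm (f 1) (f (-1))) (Rm b f) = (-2 : ℂ) • Rm b f := by
  refine ⟨?_, ?_, ?_, ?_⟩ <;>
    simp only [Qp, Qm, Rp, Rm, pbComm_smul_right, h.comm_ff_bf, isSign_one, isSign_neg_one] <;>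
    norm_num [smul_smul]

theorem comm_bPlusSq_QR :
    pbComm (b 1 * b 1) (Qp b f) = (-2 : ℂ) • Rp b f ∧
    pbComm (b 1 * b 1) (Qm b f) = 0 ∧
    pbComm (b 1 * b 1) (Rp b f) = 0 ∧
    pbComm (b 1 * b 1) (Rm b f) = (-2 : ℂ) • Qm b f := by
  refine ⟨?_, ?_, ?_, ?_⟩ <;>
    simp only [Qp, Qm, Rp, Rm, pbComm_smul_right, h.comm_bSq_bf, isSign_one, isSign_neg_one] <;>
    norm_num [smul_smul]

theorem comm_bMinusSq_QR :
    pbComm (b (-1) * b (-1)) (Qp b f) = 0 ∧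
    pbComm (b (-1) * b (-1)) (Qm b f) = (2 : ℂ) • Rm b f ∧
    pbComm (b (-1) * b (-1)) (Rp b f) = (2 : ℂ) • Qp b f ∧
    pbComm (b (-1) * b (-1)) (Rm b f) = 0 := by
  refine ⟨?_, ?_, ?_, ?_⟩ <;>
    simp only [Qp, Qm, Rp, Rm, pbComm_smul_right, h.comm_bSq_bf, isSign_one, isSign_neg_one] <;>
    norm_num [smul_smul]

end PBF11Relations

/-- The even bilinears of `P_BF^{(1,1)}` act on the odd elements `Q^±, R^±`
by the stated commutation relations. -/
theorem even_action_on_QR {A : Type*} [Ring A] [Algebra ℂ A]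
    (b f : ℤ → A) (h : PBF11Relations b f) :
    pbComm (pbAComm (b 1) (b (-1))) (Qp b f) = (-2 : ℂ) • Qp b f ∧
    pbComm (pbAComm (b 1) (b (-1))) (Qm b f) = (2 : ℂ) • Qm b f ∧
    pbComm (pbComm (f 1) (f (-1))) (Qp b f) = (2 : ℂ) • Qp b f ∧
    pbComm (pbComm (f 1) (f (-1))) (Qm b f) = (-2 : ℂ) • Qm b f ∧
    pbComm (pbAComm (b 1) (b (-1))) (Rp b f) = (2 : ℂ) • Rp b f ∧
    pbComm (pbAComm (b 1) (b (-1))) (Rm b f) = (-2 : ℂ) • Rm b f ∧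
    pbComm (pbComm (f 1) (f (-1))) (Rp b f) = (2 : ℂ) • Rp b f ∧
    pbComm (pbComm (f 1) (f (-1))) (Rm b f) = (-2 : ℂ) • Rm b f ∧
    pbComm (pbAComm (b 1) (b (-1))) (pbComm (f 1) (f (-1))) = 0 ∧
    pbComm (b 1 * b 1) (Qp b f) = (-2 : ℂ) • Rp b f ∧
    pbComm (b 1 * b 1) (Qm b f) = 0 ∧
    pbComm (b 1 * b 1) (Rp b f) = 0 ∧
    pbComm (b 1 * b 1) (Rm b f) = (-2 : ℂ) • Qm b f ∧
    pbComm (b (-1) * b (-1)) (Qp b f) = 0 ∧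
    pbComm (b (-1) * b (-1)) (Qm b f) = (2 : ℂ) • Rm b f ∧
    pbComm (b (-1) * b (-1)) (Rp b f) = (2 : ℂ) • Qp b f ∧
    pbComm (b (-1) * b (-1)) (Rm b f) = 0 := by
  obtain ⟨bbQp, bbQm, bbRp, bbRm⟩ := h.comm_bb_QR
  obtain ⟨ffQp, ffQm, ffRp, ffRm⟩ := h.comm_ff_QR
  obtain ⟨pQp, pQm, pRp, pRm⟩ := h.comm_bPlusSq_QR
  exact ⟨bbQp, bbQm, ffQp, ffQm, bbRp, bbRm, ffRp, ffRm, h.comm_bb_ff,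
    pQp, pQm, pRp, pRm, h.comm_bMinusSq_QR⟩
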